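/- arXiv:2204.02199 — 6 statements merged into one kernel-verified Lean document; each statement's English description precedes it below -/
import Mathlib

section
/- (Composition in the stoup.) For all sets Γ₁, Γ₂ of hypothesis formulas, finite multisets Δ₁, Δ₂ of ecumenical propositional formulas, and formulas A and B: if Γ₁ ⊢_{LE_p} Δ₁;A and Γ₂ ∪ {A} ⊢_{LE_p} Δ₂;B, then Γ₁ ∪ Γ₂ ⊢_{LE_p} Δ₁,Δ₂;B (the analogous statement also holds when the stoup of the second sequent is empty). -/
/-- Ecumenical propositional formulas. -/
inductive PForm : Type
  | atom : ℕ → PForm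
  | bot : PForm
  | neg : PForm → PForm
  | conj : PForm → PForm → PForm
  | impI : PForm → PForm → PForm
  | disjI : PForm → PForm → PForm
  | impC : PForm → PForm → PForm
  | disjC : PForm → PForm → PForm
  deriving DecidableEq

/-- Prawitz' propositional ecumenical natural deduction system NE_p. -/
inductive NEp : Set PForm → PForm → Prop
  | hyp {Γ A} : A ∈ Γ → NEp Γ A
  | conjI {Γ A B} : NEp Γ A → NEp Γ B → NEp Γ (.conj A B)
  | conjE1 {Γ A B} : NEp Γ (.conj A B) → NEp Γ A
  | conjE2 {Γ A B} : NEp Γ (.conj A B) → NEp Γ B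
  | negI {Γ A} : NEp (insert A Γ) .bot → NEp Γ (.neg A)
  | negE {Γ A} : NEp Γ A → NEp Γ (.neg A) → NEp Γ .bot
  | botE {Γ A} : NEp Γ .bot → NEp Γ A
  | impII {Γ A B} : NEp (insert A Γ) B → NEp Γ (.impI A B)
  | impIE {Γ A B} : NEp Γ (.impI A B) → NEp Γ A → NEp Γ B
  | disjII1 {Γ A B} : NEp Γ A → NEp Γ (.disjI A B)
  | disjII2 {Γ A B} : NEp Γ B → NEp Γ (.disjI A B)
  | disjIE {Γ A B C} : NEp Γ (.disjI A B) → NEp (insert A Γ) C → NEp (insert B Γ) C →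
      NEp Γ C
  | impCI {Γ A B} : NEp (insert A (insert (.neg B) Γ)) .bot → NEp Γ (.impC A B)
  | impCE {Γ A B} : NEp Γ (.impC A B) → NEp Γ A → NEp Γ (.neg B) → NEp Γ .bot
  | disjCI {Γ A B} : NEp (insert (.neg A) (insert (.neg B) Γ)) .bot → NEp Γ (.disjC A B)
  | disjCE {Γ A B} : NEp Γ (.disjC A B) → NEp Γ (.neg A) → NEp Γ (.neg B) → NEp Γ .bot

/-- The natural deduction system with stoup LE_p.  `LEp Γ Δ Σ` means that the
stoup-sequent `Δ;Σ` is derivable from the set `Γ` of hypothesis formulas, where the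
classical context `Δ` is a finite multiset and the stoup `Σ` is empty (`none`) or a
single formula (`some A`). -/
inductive LEp : Set PForm → Multiset PForm → Option PForm → Prop
  | hyp {Γ A} : A ∈ Γ → LEp Γ 0 (some A)
  | der {Γ Δ A} : LEp Γ Δ (some A) → LEp Γ (A ::ₘ Δ) none
  | wI {Γ Δ} (A) : LEp Γ Δ none → LEp Γ Δ (some A)
  | wC {Γ Δ S} (A) : LEp Γ Δ S → LEp Γ (A ::ₘ Δ) S
  | cC {Γ Δ S A} : LEp Γ (A ::ₘ A ::ₘ Δ) S → LEp Γ (A ::ₘ Δ) S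
  | conjI {Γ Δ₁ Δ₂ A B} : LEp Γ Δ₁ (some A) → LEp Γ Δ₂ (some B) →
      LEp Γ (Δ₁ + Δ₂) (some (.conj A B))
  | conjE1 {Γ Δ A B} : LEp Γ Δ (some (.conj A B)) → LEp Γ Δ (some A)
  | conjE2 {Γ Δ A B} : LEp Γ Δ (some (.conj A B)) → LEp Γ Δ (some B)
  | negI {Γ Δ A} : LEp (insert A Γ) Δ none → LEp Γ Δ (some (.neg A))
  | negE {Γ Δ₁ Δ₂ A} : LEp Γ Δ₁ (some A) → LEp Γ Δ₂ (some (.neg A)) →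
      LEp Γ (Δ₁ + Δ₂) none
  | impII {Γ Δ A B} : LEp (insert A Γ) Δ (some B) → LEp Γ Δ (some (.impI A B))
  | impIE {Γ Δ₁ Δ₂ A B} : LEp Γ Δ₁ (some (.impI A B)) → LEp Γ Δ₂ (some A) →
      LEp Γ (Δ₁ + Δ₂) (some B)
  | disjII1 {Γ Δ A B} : LEp Γ Δ (some A) → LEp Γ Δ (some (.disjI A B))
  | disjII2 {Γ Δ A B} : LEp Γ Δ (some B) → LEp Γ Δ (some (.disjI A B))
  | disjIE {Γ Δ₁ Δ₂ Δ₃ A B C} : LEp Γ Δ₁ (some (.disjI A B)) →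
      LEp (insert A Γ) Δ₂ (some C) → LEp (insert B Γ) Δ₃ (some C) →
      LEp Γ (Δ₁ + Δ₂ + Δ₃) (some C)
  | impCI {Γ Δ A B} : LEp (insert A Γ) (B ::ₘ Δ) none → LEp Γ Δ (some (.impC A B))
  | impCE {Γ Δ₁ Δ₂ Δ₃ A B} : LEp Γ Δ₁ (some (.impC A B)) → LEp Γ Δ₂ (some A) →
      LEp (insert B Γ) Δ₃ none → LEp Γ (Δ₁ + Δ₂ + Δ₃) none
  | disjCI {Γ Δ A B} : LEp Γ (A ::ₘ B ::ₘ Δ) none → LEp Γ Δ (some (.disjC A B))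
  | disjCE {Γ Δ₁ Δ₂ Δ₃ A B} : LEp Γ Δ₁ (some (.disjC A B)) →
      LEp (insert A Γ) Δ₂ none → LEp (insert B Γ) Δ₃ none →
      LEp Γ (Δ₁ + Δ₂ + Δ₃) none

/-- The set `¬Δ` of negations of the formulas occurring in the multiset `Δ`. -/
def negSet (Δ : Multiset PForm) : Set PForm := {B | ∃ D ∈ Δ, B = PForm.neg D}


/-- Monotonicity of `LEp` in the hypothesis set. -/
theorem LEp_mono {Γ Γ' : Set PForm} {Δ : Multiset PForm} {S : Option PForm}
    (h : LEp Γ Δ S) (hs : Γ ⊆ Γ') : LEp Γ' Δ S := by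
  induction h generalizing Γ' with
  | hyp hm => exact .hyp (hs hm)
  | der _ ih => exact .der (ih hs)
  | wI A _ ih => exact .wI A (ih hs)
  | wC A _ ih => exact .wC A (ih hs)
  | cC _ ih => exact .cC (ih hs)
  | conjI _ _ ih1 ih2 => exact .conjI (ih1 hs) (ih2 hs)
  | conjE1 _ ih => exact .conjE1 (ih hs)
  | conjE2 _ ih => exact .conjE2 (ih hs)
  | negI _ ih => exact .negI (ih (Set.insert_subset_insert hs))
  | negE _ _ ih1 ih2 => exact .negE (ih1 hs) (ih2 hs)
  | impII _ ih => exact .impII (ih (Set.insert_subset_insert hs))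
  | impIE _ _ ih1 ih2 => exact .impIE (ih1 hs) (ih2 hs)
  | disjII1 _ ih => exact .disjII1 (ih hs)
  | disjII2 _ ih => exact .disjII2 (ih hs)
  | disjIE _ _ _ ih1 ih2 ih3 =>
      exact .disjIE (ih1 hs) (ih2 (Set.insert_subset_insert hs))
        (ih3 (Set.insert_subset_insert hs))
  | impCI _ ih => exact .impCI (ih (Set.insert_subset_insert hs))
  | impCE _ _ _ ih1 ih2 ih3 =>
      exact .impCE (ih1 hs) (ih2 hs) (ih3 (Set.insert_subset_insert hs))
  | disjCI _ ih => exact .disjCI (ih hs)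
  | disjCE _ _ _ ih1 ih2 ih3 =>
      exact .disjCE (ih1 hs) (ih2 (Set.insert_subset_insert hs))
        (ih3 (Set.insert_subset_insert hs))

/-- Weakening of the classical context by a multiset. -/
theorem LEp_wCm {Γ : Set PForm} {Δ : Multiset PForm} {S : Option PForm}
    (Δ' : Multiset PForm) (h : LEp Γ Δ S) : LEp Γ (Δ' + Δ) S := by
  induction Δ' using Multiset.induction with
  | empty => simpa using h
  | cons a Δ' ih => rw [Multiset.cons_add]; exact .wC a ih

/-- Contraction of the classical context by a multiset. -/
theorem LEp_cCm {Γ : Set PForm} {Δ : Multiset PForm} {S : Option PForm}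
    (Δ' : Multiset PForm) (h : LEp Γ (Δ' + (Δ' + Δ)) S) : LEp Γ (Δ' + Δ) S := by
  induction Δ' using Multiset.induction generalizing Δ with
  | empty => simpa using h
  | cons a Δ' ih =>
      have e : (a ::ₘ Δ') + ((a ::ₘ Δ') + Δ) = a ::ₘ a ::ₘ (Δ' + (Δ' + Δ)) := by
        simp [Multiset.cons_add, Multiset.cons_swap]
      rw [e] at h
      have h2 := LEp.cC h
      have e2 : a ::ₘ (Δ' + (Δ' + Δ)) = Δ' + (Δ' + (a ::ₘ Δ)) := by
        simp only [Multiset.cons_add, ← Multiset.singleton_add]; ac_rfl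
      rw [e2] at h2
      have h3 := ih h2
      have e3 : Δ' + (a ::ₘ Δ) = (a ::ₘ Δ') + Δ := by
        simp only [Multiset.cons_add, ← Multiset.singleton_add]; ac_rfl
      rwa [e3] at h3

theorem LEp_cC2 {Γ : Set PForm} {Δa Δb Δ₁ : Multiset PForm} {S : Option PForm}
    (h : LEp Γ ((Δa + Δ₁) + (Δb + Δ₁)) S) : LEp Γ ((Δa + Δb) + Δ₁) S := by
  have e : (Δa + Δ₁) + (Δb + Δ₁) = Δ₁ + (Δ₁ + (Δa + Δb)) := by ac_rfl
  rw [e] at h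
  have h2 := LEp_cCm Δ₁ h
  rwa [add_comm] at h2

theorem LEp_cC3 {Γ : Set PForm} {Δa Δb Δc Δ₁ : Multiset PForm} {S : Option PForm}
    (h : LEp Γ ((Δa + Δ₁) + (Δb + Δ₁) + (Δc + Δ₁)) S) :
    LEp Γ ((Δa + Δb + Δc) + Δ₁) S := by
  have e : (Δa + Δ₁) + (Δb + Δ₁) + (Δc + Δ₁)
      = Δ₁ + (Δ₁ + (Δ₁ + (Δa + Δb + Δc))) := by ac_rfl
  rw [e] at h
  have h2 := LEp_cCm Δ₁ (LEp_cCm Δ₁ h)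
  rwa [add_comm] at h2

theorem cond_insert {A C : PForm} {Γ Γ' : Set PForm}
    (h : ∀ B ∈ Γ, B = A ∨ B ∈ Γ') :
    ∀ B ∈ insert C Γ, B = A ∨ B ∈ insert C Γ' := by
  intro B hB
  rcases hB with rfl | hB
  · exact Or.inr (Set.mem_insert _ _)
  · exact (h B hB).imp id fun hx => Set.mem_insert_iff.mpr (Or.inr hx)

theorem LEp_subst {Γ₁ : Set PForm} {Δ₁ : Multiset PForm} {A : PForm}
    (h₁ : LEp Γ₁ Δ₁ (some A)) :
    ∀ {Γ Δ S}, LEp Γ Δ S → ∀ Γ', (∀ B ∈ Γ, B = A ∨ B ∈ Γ') →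
      LEp (Γ₁ ∪ Γ') (Δ + Δ₁) S := by
  intro Γ Δ S h
  induction h with
  | @hyp Γ B hm =>
      intro Γ' hc
      rw [zero_add]
      rcases hc B hm with rfl | hB
      · exact LEp_mono h₁ Set.subset_union_left
      · simpa using LEp_wCm Δ₁ (LEp.hyp (Set.mem_union_right _ hB))
  | der _ ih =>
      intro Γ' hc
      rw [Multiset.cons_add]
      exact .der (ih Γ' hc)
  | wI A' _ ih => exact fun Γ' hc => .wI A' (ih Γ' hc)
  | wC A' _ ih =>
      intro Γ' hc
      rw [Multiset.cons_add]
      exact .wC A' (ih Γ' hc)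
  | cC _ ih =>
      intro Γ' hc
      have := ih Γ' hc
      rw [Multiset.cons_add, Multiset.cons_add] at this
      rw [Multiset.cons_add]
      exact .cC this
  | conjI _ _ ih1 ih2 => exact fun Γ' hc => LEp_cC2 (.conjI (ih1 Γ' hc) (ih2 Γ' hc))
  | conjE1 _ ih => exact fun Γ' hc => .conjE1 (ih Γ' hc)
  | conjE2 _ ih => exact fun Γ' hc => .conjE2 (ih Γ' hc)
  | @negI Γ Δ A' _ ih =>
      intro Γ' hc
      have := ih (insert A' Γ') (cond_insert hc)
      rw [Set.union_insert] at this
      exact .negI this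
  | negE _ _ ih1 ih2 => exact fun Γ' hc => LEp_cC2 (.negE (ih1 Γ' hc) (ih2 Γ' hc))
  | @impII Γ Δ A' B' _ ih =>
      intro Γ' hc
      have := ih (insert A' Γ') (cond_insert hc)
      rw [Set.union_insert] at this
      exact .impII this
  | impIE _ _ ih1 ih2 => exact fun Γ' hc => LEp_cC2 (.impIE (ih1 Γ' hc) (ih2 Γ' hc))
  | disjII1 _ ih => exact fun Γ' hc => .disjII1 (ih Γ' hc)
  | disjII2 _ ih => exact fun Γ' hc => .disjII2 (ih Γ' hc)
  | @disjIE Γ Δa Δb Δc A' B' C' _ _ _ ih1 ih2 ih3 =>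
      intro Γ' hc
      have h2 := ih2 (insert A' Γ') (cond_insert hc)
      have h3 := ih3 (insert B' Γ') (cond_insert hc)
      rw [Set.union_insert] at h2 h3
      exact LEp_cC3 (.disjIE (ih1 Γ' hc) h2 h3)
  | @impCI Γ Δ A' B' _ ih =>
      intro Γ' hc
      have := ih (insert A' Γ') (cond_insert hc)
      rw [Set.union_insert, Multiset.cons_add] at this
      exact .impCI this
  | @impCE Γ Δa Δb Δc A' B' _ _ _ ih1 ih2 ih3 =>
      intro Γ' hc
      have h3 := ih3 (insert B' Γ') (cond_insert hc)
      rw [Set.union_insert] at h3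
      exact LEp_cC3 (.impCE (ih1 Γ' hc) (ih2 Γ' hc) h3)
  | disjCI _ ih =>
      intro Γ' hc
      have := ih Γ' hc
      rw [Multiset.cons_add, Multiset.cons_add] at this
      exact .disjCI this
  | @disjCE Γ Δa Δb Δc A' B' _ _ _ ih1 ih2 ih3 =>
      intro Γ' hc
      have h2 := ih2 (insert A' Γ') (cond_insert hc)
      have h3 := ih3 (insert B' Γ') (cond_insert hc)
      rw [Set.union_insert] at h2 h3
      exact LEp_cC3 (.disjCE (ih1 Γ' hc) h2 h3)

/-- Composition in the stoup: if `Γ₁ ⊢ Δ₁;A` and `Γ₂ ∪ {A} ⊢ Δ₂;Σ`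
(with `Σ = B` or `Σ` empty), then `Γ₁ ∪ Γ₂ ⊢ Δ₁,Δ₂;Σ`. -/
theorem LEp_comp_stoup (Γ₁ Γ₂ : Set PForm) (Δ₁ Δ₂ : Multiset PForm) (A : PForm)
    (S : Option PForm) (h₁ : LEp Γ₁ Δ₁ (some A)) (h₂ : LEp (insert A Γ₂) Δ₂ S) :
    LEp (Γ₁ ∪ Γ₂) (Δ₁ + Δ₂) S := by
  have := LEp_subst h₁ h₂ Γ₂ (fun B hB => by
    rcases hB with rfl | hB
    · exact Or.inl rfl
    · exact Or.inr hB)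
  rwa [add_comm] at this
end

section
/- (Generalized Peirce's law in LE_p.) For all ecumenical propositional formulas A and B and all j, k ∈ {i, c}, the formula ((A →ⱼ B) →ₖ A) →_c A is a theorem of LE_p, i.e. ∅ ⊢_{LE_p} ·;(((A →ⱼ B) →ₖ A) →_c A). -/
private lemma LEp_key (A B : PForm) (impj : PForm → PForm → PForm)
    (hj : impj = PForm.impI ∨ impj = PForm.impC) (Γ : Set PForm) :
    LEp Γ (A ::ₘ 0) (some (impj A B)) := by
  rcases hj with h | h <;> subst h
  · exact .impII (.wI B (.der (.hyp (Set.mem_insert A Γ))))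
  · exact .impCI (.wC B (.der (.hyp (Set.mem_insert A Γ))))

/-- Generalized Peirce's law: for j,k ∈ {i,c},
`((A →ⱼ B) →ₖ A) →_c A` is a theorem of LE_p. -/
theorem LEp_peirce (A B : PForm) (impj impk : PForm → PForm → PForm)
    (hj : impj = PForm.impI ∨ impj = PForm.impC)
    (hk : impk = PForm.impI ∨ impk = PForm.impC) :
    LEp ∅ 0 (some (.impC (impk (impj A B) A) A)) := by
  apply LEp.impCI
  set Γ : Set PForm := insert (impk (impj A B) A) ∅
  have hhyp : LEp Γ 0 (some (impk (impj A B) A)) := .hyp (Set.mem_insert _ _)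
  have hkey := LEp_key A B impj hj Γ
  rcases hk with h | h <;> subst h
  · have := LEp.der (LEp.impIE hhyp hkey)
    apply LEp.cC
    simpa using this
  · have h3 : LEp (insert A Γ) (A ::ₘ 0) none := .der (.hyp (Set.mem_insert A Γ))
    have := LEp.impCE hhyp hkey h3
    apply LEp.cC
    simpa using this
end

section
/- (Generalized Dummett linearity axiom in LE_p.) For all ecumenical propositional formulas A and B and all j, k ∈ {i, c}, the formula (A →ⱼ B) ∨_c (B →ₖ A) is a theorem of LE_p, i.e. ∅ ⊢_{LE_p} ·;((A →ⱼ B) ∨_c (B →ₖ A)). -/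
lemma LEp_aux (A B : PForm) (impk : PForm → PForm → PForm)
    (hk : impk = PForm.impI ∨ impk = PForm.impC)
    (Γ : Set PForm) (hA : A ∈ Γ) : LEp Γ 0 (some (impk B A)) := by
  rcases hk with rfl | rfl
  · exact LEp.impII (LEp.hyp (Set.mem_insert_iff.mpr (Or.inr hA)))
  · exact LEp.impCI (LEp.der (LEp.hyp (Set.mem_insert_iff.mpr (Or.inr hA))))

/-- Generalized Dummett linearity axiom: for j,k ∈ {i,c},
`(A →ⱼ B) ∨_c (B →ₖ A)` is a theorem of LE_p. -/
theorem LEp_dummett (A B : PForm) (impj impk : PForm → PForm → PForm)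
    (hj : impj = PForm.impI ∨ impj = PForm.impC)
    (hk : impk = PForm.impI ∨ impk = PForm.impC) :
    LEp ∅ 0 (some (.disjC (impj A B) (impk B A))) := by
  apply LEp.disjCI
  apply LEp.der
  have haux := LEp_aux A B impk hk (insert A ∅) (Set.mem_insert A ∅)
  rcases hj with rfl | rfl
  · exact LEp.impII (LEp.wI B (LEp.der haux))
  · exact LEp.impCI (LEp.wC B (LEp.der haux))
end

section
/- In Prawitz' propositional ecumenical system NE_p, if the main connective of the formula A is classical (i.e. A is of the form B ∨_c C or B →_c C), then Γ ∪ {¬A} ⊢_{NE_p} ⊥ implies Γ ⊢_{NE_p} A, for every set Γ of ecumenical propositional formulas. -/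
lemma NEp.mono {Γ : Set PForm} {A : PForm} (h : NEp Γ A) :
    ∀ {Γ' : Set PForm}, Γ ⊆ Γ' → NEp Γ' A := by
  induction h with
  | hyp hm => exact fun hs => .hyp (hs hm)
  | conjI _ _ ih1 ih2 => exact fun hs => .conjI (ih1 hs) (ih2 hs)
  | conjE1 _ ih => exact fun hs => .conjE1 (ih hs)
  | conjE2 _ ih => exact fun hs => .conjE2 (ih hs)
  | negI _ ih => exact fun hs => .negI (ih (Set.insert_subset_insert hs))
  | negE _ _ ih1 ih2 => exact fun hs => .negE (ih1 hs) (ih2 hs)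
  | botE _ ih => exact fun hs => .botE (ih hs)
  | impII _ ih => exact fun hs => .impII (ih (Set.insert_subset_insert hs))
  | impIE _ _ ih1 ih2 => exact fun hs => .impIE (ih1 hs) (ih2 hs)
  | disjII1 _ ih => exact fun hs => .disjII1 (ih hs)
  | disjII2 _ ih => exact fun hs => .disjII2 (ih hs)
  | disjIE _ _ _ ih1 ih2 ih3 =>
      exact fun hs => .disjIE (ih1 hs) (ih2 (Set.insert_subset_insert hs))
        (ih3 (Set.insert_subset_insert hs))
  | impCI _ ih =>
      exact fun hs => .impCI (ih (Set.insert_subset_insert (Set.insert_subset_insert hs)))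
  | impCE _ _ _ ih1 ih2 ih3 => exact fun hs => .impCE (ih1 hs) (ih2 hs) (ih3 hs)
  | disjCI _ ih =>
      exact fun hs => .disjCI (ih (Set.insert_subset_insert (Set.insert_subset_insert hs)))
  | disjCE _ _ _ ih1 ih2 ih3 => exact fun hs => .disjCE (ih1 hs) (ih2 hs) (ih3 hs)

/-- in NE_p, if the main connective of `A` is classical and
`Γ ∪ {¬A} ⊢ ⊥`, then `Γ ⊢ A`. -/
theorem NEp_classical_dne (Γ : Set PForm) (A : PForm)
    (hA : ∃ B C, A = PForm.disjC B C ∨ A = PForm.impC B C)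
    (h : NEp (insert (.neg A) Γ) .bot) :
    NEp Γ A := by
  -- From h, Γ ⊢ ¬¬A.
  have hnn : NEp Γ (.neg (.neg A)) := .negI h
  obtain ⟨B, C, hA | hA⟩ := hA <;> subst hA
  · -- A = B ∨_c C
    apply NEp.disjCI
    set Γ' : Set PForm := insert (.neg B) (insert (.neg C) Γ) with hΓ'
    have hnA : NEp Γ' (.neg (.disjC B C)) := by
      apply NEp.negI
      exact NEp.disjCE (.hyp (Set.mem_insert _ _))
        (.hyp (by simp [Γ'])) (.hyp (by simp [Γ']))
    exact NEp.negE hnA (hnn.mono ((Set.subset_insert _ _).trans (Set.subset_insert _ _)))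
  · -- A = B →_c C
    apply NEp.impCI
    set Γ' : Set PForm := insert B (insert (.neg C) Γ) with hΓ'
    have hnA : NEp Γ' (.neg (.impC B C)) := by
      apply NEp.negI
      exact NEp.impCE (.hyp (Set.mem_insert _ _))
        (.hyp (by simp [Γ'])) (.hyp (by simp [Γ']))
    exact NEp.negE hnA (hnn.mono ((Set.subset_insert _ _).trans (Set.subset_insert _ _)))
end

section
/- (Classical modus ponens for classical succedents.) Let A and B be ecumenical propositional formulas such that the main connective of B is classical (i.e. B is of the form C ∨_c D or C →_c D). Then {A →_c B, A} ⊢_{NE_p} B. -/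
/-- Classical modus ponens for classical succedents: if the main
connective of `B` is classical, then `{A →_c B, A} ⊢_{NE_p} B`. -/
theorem NEp_classical_mp (A B : PForm)
    (hB : ∃ C D, B = PForm.disjC C D ∨ B = PForm.impC C D) :
    NEp {PForm.impC A B, A} B := by
  obtain ⟨C, D, hB | hB⟩ := hB <;> subst hB
  · apply NEp.disjCI
    have hnB : NEp (insert (.neg C) (insert (.neg D) {PForm.impC A (.disjC C D), A}))
        (.neg (.disjC C D)) := by
      apply NEp.negI
      exact NEp.disjCE (A := C) (B := D) (NEp.hyp (by simp)) (NEp.hyp (by simp))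
        (NEp.hyp (by simp))
    exact NEp.impCE (A := A) (NEp.hyp (by simp)) (NEp.hyp (by simp)) hnB
  · apply NEp.impCI
    have hnB : NEp (insert C (insert (.neg D) {PForm.impC A (.impC C D), A}))
        (.neg (.impC C D)) := by
      apply NEp.negI
      exact NEp.impCE (A := C) (B := D) (NEp.hyp (by simp)) (NEp.hyp (by simp))
        (NEp.hyp (by simp))
    exact NEp.impCE (A := A) (NEp.hyp (by simp)) (NEp.hyp (by simp)) hnB
end

section
/- In the system LE_p, for every set Γ of hypothesis formulas, finite multiset Δ, and ecumenical propositional formulas B and C: if Γ ∪ {¬(B ∨_c C)} ⊢_{LE_p} Δ;· (where ¬(B ∨_c C) is taken as a hypothesis of the form ·;¬(B ∨_c C)), then Γ ⊢_{LE_p} Δ;(B ∨_c C). -/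
lemma LEp.mono : ∀ {Γ Δ S}, LEp Γ Δ S → ∀ {Γ'}, Γ ⊆ Γ' → LEp Γ' Δ S := by
  intro Γ Δ S h
  induction h with
  | hyp hA => exact fun hs => LEp.hyp (hs hA)
  | der _ ih => exact fun hs => LEp.der (ih hs)
  | wI A _ ih => exact fun hs => LEp.wI A (ih hs)
  | wC A _ ih => exact fun hs => LEp.wC A (ih hs)
  | cC _ ih => exact fun hs => LEp.cC (ih hs)
  | conjI _ _ ih1 ih2 => exact fun hs => LEp.conjI (ih1 hs) (ih2 hs)
  | conjE1 _ ih => exact fun hs => LEp.conjE1 (ih hs)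
  | conjE2 _ ih => exact fun hs => LEp.conjE2 (ih hs)
  | negI _ ih => exact fun hs => LEp.negI (ih (Set.insert_subset_insert hs))
  | negE _ _ ih1 ih2 => exact fun hs => LEp.negE (ih1 hs) (ih2 hs)
  | impII _ ih => exact fun hs => LEp.impII (ih (Set.insert_subset_insert hs))
  | impIE _ _ ih1 ih2 => exact fun hs => LEp.impIE (ih1 hs) (ih2 hs)
  | disjII1 _ ih => exact fun hs => LEp.disjII1 (ih hs)
  | disjII2 _ ih => exact fun hs => LEp.disjII2 (ih hs)
  | disjIE _ _ _ ih1 ih2 ih3 => exact fun hs => LEp.disjIE (ih1 hs) (ih2 (Set.insert_subset_insert hs)) (ih3 (Set.insert_subset_insert hs))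
  | impCI _ ih => exact fun hs => LEp.impCI (ih (Set.insert_subset_insert hs))
  | impCE _ _ _ ih1 ih2 ih3 => exact fun hs => LEp.impCE (ih1 hs) (ih2 hs) (ih3 (Set.insert_subset_insert hs))
  | disjCI _ ih => exact fun hs => LEp.disjCI (ih hs)
  | disjCE _ _ _ ih1 ih2 ih3 => exact fun hs => LEp.disjCE (ih1 hs) (ih2 (Set.insert_subset_insert hs)) (ih3 (Set.insert_subset_insert hs))

lemma LEp.wCmul {Γ Δ S} (Δ' : Multiset PForm) (h : LEp Γ Δ S) : LEp Γ (Δ' + Δ) S := by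
  induction Δ' using Multiset.induction with
  | empty => simpa using h
  | cons A Δ'' ih => simpa [Multiset.cons_add] using LEp.wC A ih

lemma LEp.contract : ∀ (Δ' : Multiset PForm) {Γ Δ S},
    LEp Γ (Δ' + Δ' + Δ) S → LEp Γ (Δ' + Δ) S := by
  intro Δ'
  induction Δ' using Multiset.induction with
  | empty => intro Γ Δ S h; simpa using h
  | cons A Δ'' ih =>
    intro Γ Δ S h
    have e : (A ::ₘ Δ'') + (A ::ₘ Δ'') + Δ = Δ'' + Δ'' + (A ::ₘ A ::ₘ Δ) := by
      simp only [← Multiset.singleton_add]; abel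
    rw [e] at h
    have h2 := ih h
    have e2 : Δ'' + (A ::ₘ A ::ₘ Δ) = A ::ₘ A ::ₘ (Δ'' + Δ) := by
      simp only [← Multiset.singleton_add]; abel
    rw [e2] at h2
    have h3 := LEp.cC h2
    have e3 : A ::ₘ (Δ'' + Δ) = (A ::ₘ Δ'') + Δ := by
      simp only [← Multiset.singleton_add]; abel
    rwa [e3] at h3

lemma LEp.contract2 {Γ S} {Δ' Δ₁ Δ₂ : Multiset PForm}
    (h : LEp Γ ((Δ' + Δ₁) + (Δ' + Δ₂)) S) : LEp Γ (Δ' + (Δ₁ + Δ₂)) S := by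
  have e : (Δ' + Δ₁) + (Δ' + Δ₂) = Δ' + Δ' + (Δ₁ + Δ₂) := by abel
  rw [e] at h
  exact LEp.contract Δ' h

lemma LEp.contract3 {Γ S} {Δ' Δ₁ Δ₂ Δ₃ : Multiset PForm}
    (h : LEp Γ ((Δ' + Δ₁) + (Δ' + Δ₂) + (Δ' + Δ₃)) S) :
    LEp Γ (Δ' + (Δ₁ + Δ₂ + Δ₃)) S := by
  have e : (Δ' + Δ₁) + (Δ' + Δ₂) + (Δ' + Δ₃) = Δ' + Δ' + (Δ' + (Δ₁ + Δ₂ + Δ₃)) := by abel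
  rw [e] at h
  have h2 := LEp.contract Δ' h
  have e2 : Δ' + (Δ' + (Δ₁ + Δ₂ + Δ₃)) = Δ' + Δ' + (Δ₁ + Δ₂ + Δ₃) := by abel
  rw [e2] at h2
  exact LEp.contract Δ' h2

lemma setPerm (A N : PForm) (Γ : Set PForm) :
    insert A (insert N Γ) = insert N (insert A Γ) := by
  ext x; simp [or_left_comm]

lemma mvCons (A : PForm) (Δ' Δ : Multiset PForm) :
    Δ' + (A ::ₘ Δ) = A ::ₘ (Δ' + Δ) := by
  simp only [← Multiset.singleton_add]; abel

lemma LEp.subst : ∀ {Γ₀ Δ S}, LEp Γ₀ Δ S → ∀ {Γ N Δ'}, Γ₀ = insert N Γ →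
    LEp Γ Δ' (some N) → LEp Γ (Δ' + Δ) S := by
  intro Γ₀ Δ S h
  induction h with
  | @hyp _ A hA =>
    intro Γ N Δ' hΓ d
    rw [hΓ] at hA
    rcases hA with rfl | hA
    · simpa using d
    · simpa using LEp.wCmul Δ' (LEp.hyp hA)
  | @der _ _ A _ ih =>
    intro Γ N Δ' hΓ d
    rw [mvCons]; exact LEp.der (ih hΓ d)
  | wI A _ ih => intro Γ N Δ' hΓ d; exact LEp.wI A (ih hΓ d)
  | @wC _ _ _ A _ ih =>
    intro Γ N Δ' hΓ d; rw [mvCons]; exact LEp.wC A (ih hΓ d)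
  | @cC _ _ _ A h' ih =>
    intro Γ N Δ' hΓ d
    have := ih hΓ d
    rw [mvCons, mvCons] at this
    rw [mvCons]; exact LEp.cC this
  | conjI _ _ ih1 ih2 =>
    intro Γ N Δ' hΓ d
    exact LEp.contract2 (LEp.conjI (ih1 hΓ d) (ih2 hΓ d))
  | conjE1 _ ih => intro Γ N Δ' hΓ d; exact LEp.conjE1 (ih hΓ d)
  | conjE2 _ ih => intro Γ N Δ' hΓ d; exact LEp.conjE2 (ih hΓ d)
  | @negI _ _ A _ ih =>
    intro Γ N Δ' hΓ d
    exact LEp.negI (ih (by rw [hΓ]; exact setPerm A N Γ) (LEp.mono d (Set.subset_insert _ _)))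
  | negE _ _ ih1 ih2 =>
    intro Γ N Δ' hΓ d
    exact LEp.contract2 (LEp.negE (ih1 hΓ d) (ih2 hΓ d))
  | @impII _ _ A _ _ ih =>
    intro Γ N Δ' hΓ d
    exact LEp.impII (ih (by rw [hΓ]; exact setPerm A N Γ) (LEp.mono d (Set.subset_insert _ _)))
  | impIE _ _ ih1 ih2 =>
    intro Γ N Δ' hΓ d
    exact LEp.contract2 (LEp.impIE (ih1 hΓ d) (ih2 hΓ d))
  | disjII1 _ ih => intro Γ N Δ' hΓ d; exact LEp.disjII1 (ih hΓ d)
  | disjII2 _ ih => intro Γ N Δ' hΓ d; exact LEp.disjII2 (ih hΓ d)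
  | @disjIE _ _ _ _ A B _ _ _ _ ih1 ih2 ih3 =>
    intro Γ N Δ' hΓ d
    exact LEp.contract3 (LEp.disjIE (ih1 hΓ d) (ih2 (by rw [hΓ]; exact setPerm A N Γ) (LEp.mono d (Set.subset_insert _ _))) (ih3 (by rw [hΓ]; exact setPerm B N Γ) (LEp.mono d (Set.subset_insert _ _))))
  | @impCI _ _ A B _ ih =>
    intro Γ N Δ' hΓ d
    have := ih (by rw [hΓ]; exact setPerm A N Γ) (LEp.mono d (Set.subset_insert _ _))
    rw [mvCons] at this
    exact LEp.impCI this
  | @impCE _ _ _ _ A B _ _ _ ih1 ih2 ih3 =>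
    intro Γ N Δ' hΓ d
    exact LEp.contract3 (LEp.impCE (ih1 hΓ d) (ih2 hΓ d) (ih3 (by rw [hΓ]; exact setPerm B N Γ) (LEp.mono d (Set.subset_insert _ _))))
  | @disjCI _ _ A B _ ih =>
    intro Γ N Δ' hΓ d
    have := ih hΓ d
    rw [mvCons, mvCons] at this
    exact LEp.disjCI this
  | @disjCE _ _ _ _ A B _ _ _ ih1 ih2 ih3 =>
    intro Γ N Δ' hΓ d
    exact LEp.contract3 (LEp.disjCE (ih1 hΓ d) (ih2 (by rw [hΓ]; exact setPerm A N Γ) (LEp.mono d (Set.subset_insert _ _))) (ih3 (by rw [hΓ]; exact setPerm B N Γ) (LEp.mono d (Set.subset_insert _ _))))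

/-- in LE_p, if `Γ ∪ {¬(B ∨_c C)} ⊢ Δ;·` then `Γ ⊢ Δ;(B ∨_c C)`. -/
theorem LEp_disjC_from_neg (Γ : Set PForm) (Δ : Multiset PForm) (B C : PForm)
    (h : LEp (insert (.neg (.disjC B C)) Γ) Δ none) :
    LEp Γ Δ (some (.disjC B C)) := by
  have d : LEp Γ (B ::ₘ C ::ₘ 0) (some (.neg (.disjC B C))) := by
    apply LEp.negI
    have h1 : LEp (insert (PForm.disjC B C) Γ) 0 (some (.disjC B C)) :=
      LEp.hyp (Set.mem_insert _ _)
    have h2 : LEp (insert B (insert (PForm.disjC B C) Γ)) (B ::ₘ 0) none :=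
      LEp.der (LEp.hyp (Set.mem_insert _ _))
    have h3 : LEp (insert C (insert (PForm.disjC B C) Γ)) (C ::ₘ 0) none :=
      LEp.der (LEp.hyp (Set.mem_insert _ _))
    have := LEp.disjCE h1 h2 h3
    simpa using this
  have := LEp.subst h rfl d
  have e : (B ::ₘ C ::ₘ 0) + Δ = B ::ₘ C ::ₘ Δ := by
    simp [Multiset.cons_add]
  rw [e] at this
  exact LEp.disjCI this
end
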